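/- There exists a uniquely geodesic metric space M₀ such that for every positive integer n, μ_n(M₀) = n² − 2n + 2. (Such a space is obtained by endowing the complex plane with the metric d(z,w) = |z − w| if w = 0, or if w ≠ 0 and z/w is real, and d(z,w) = |z| + |w| otherwise.) -/

import Mathlib

/-- `(a,b,c)` is a 3-term arithmetic progression in the metric space `M`:
`d(a,b) = d(b,c) = (1/2)·d(a,c)`. -/
def IsAP3 {M : Type*} [MetricSpace M] (a b c : M) : Prop :=
  dist a b = dist b c ∧ dist b c = dist a c / 2

/-- The set of 3-term arithmetic progressions with all entries in `A`. -/
def AT {M : Type*} [MetricSpace M] (A : Set M) : Set (M × M × M) :=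
  {p | p.1 ∈ A ∧ p.2.1 ∈ A ∧ p.2.2 ∈ A ∧ IsAP3 p.1 p.2.1 p.2.2}

/-- `γ : ℝ → M` (restricted to `[0, dist p q]`) is a geodesic from `p` to `q`. -/
def IsGeodesicMap {M : Type*} [MetricSpace M] (p q : M) (γ : ℝ → M) : Prop :=
  γ 0 = p ∧ γ (dist p q) = q ∧
  ∀ s ∈ Set.Icc (0 : ℝ) (dist p q), ∀ t ∈ Set.Icc (0 : ℝ) (dist p q),
    dist (γ s) (γ t) = |s - t|

/-- `M` is uniquely geodesic. -/
def UniquelyGeodesic (M : Type*) [MetricSpace M] : Prop :=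
  ∀ p q : M, p ≠ q →
    (∃ γ : ℝ → M, IsGeodesicMap p q γ) ∧
    ∀ γ₁ γ₂ : ℝ → M, IsGeodesicMap p q γ₁ → IsGeodesicMap p q γ₂ →
      ∀ t ∈ Set.Icc (0 : ℝ) (dist p q), γ₁ t = γ₂ t

/-!
With unique midpoints, a progression `(a, b, c)` is determined by `(a, c)`, so a set `A` of
size `n` carries at most `n²` of them minus the number of ordered pairs `a ≠ c` with no midpoint
in `A`. These pairs form a connected graph on `A` (the closest pair across a cut has no midpoint in
`A`), so there are at least `2(n - 1)` of them, giving `n² - 2n + 2`.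

The bound is attained in the hedgehog, countably many half-lines glued at their endpoints (the
subspace of the paper's metric on `ℂ` formed by countably many rays): take the centre and `n - 1`
points at distance `1` on distinct branches. Any two points of the hedgehog lie on a line made of
two branches that contains every point between them, so geodesics, and midpoints, are unique.
-/

open Set

section Counting

variable {M : Type*} [MetricSpace M]

lemma IsAP3.symm {a b c : M} (h : IsAP3 a b c) : IsAP3 c b a := by
  obtain ⟨h₁, h₂⟩ := h
  exact ⟨by rw [dist_comm c b, dist_comm b a, h₁], by rw [dist_comm b a, h₁, h₂, dist_comm a c]⟩

lemma IsAP3.dist_add_dist {a b c : M} (h : IsAP3 a b c) : dist a b + dist b c = dist a c := by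
  linarith [h.1, h.2]

def noMidpointGraph (M : Type*) [MetricSpace M] : SimpleGraph M where
  Adj a c := a ≠ c ∧ ∀ b, ¬IsAP3 a b c
  symm := ⟨fun _ _ h => ⟨h.1.symm, fun b hb => h.2 b hb.symm⟩⟩
  loopless := ⟨fun _ h => h.1 rfl⟩

@[simp] lemma noMidpointGraph_adj {a c : M} :
    (noMidpointGraph M).Adj a c ↔ a ≠ c ∧ ∀ b, ¬IsAP3 a b c := Iff.rfl

lemma SimpleGraph.connected_of_forall_exists_adj_compl {V : Type*} [Nonempty V]
    {G : SimpleGraph V} (h : ∀ S : Set V, S.Nonempty → S ≠ univ → ∃ a ∈ S, ∃ c ∉ S, G.Adj a c) :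
    G.Connected := by
  obtain ⟨v⟩ := ‹Nonempty V›
  refine G.connected_iff_exists_forall_reachable.2 ⟨v, ?_⟩
  by_contra! hS
  obtain ⟨a, ha, c, hc, hac⟩ := h {w | G.Reachable v w} ⟨v, .refl v⟩
    fun h' => hS.elim fun w hw => hw (eq_univ_iff_forall.1 h' w)
  exact hc (ha.trans hac.reachable)

-- A closest pair across a cut has no midpoint: a midpoint would be strictly closer to both ends.
lemma noMidpointGraph_connected [Finite M] [Nonempty M] : (noMidpointGraph M).Connected := by
  refine SimpleGraph.connected_of_forall_exists_adj_compl fun S hS hSu => ?_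
  have hcross : (S ×ˢ Sᶜ).Nonempty := hS.prod (nonempty_compl.2 hSu)
  obtain ⟨⟨a, c⟩, ⟨ha, hc⟩, hmin⟩ :=
    (S ×ˢ Sᶜ).exists_min_image (fun p => dist p.1 p.2) (toFinite _) hcross
  refine ⟨a, ha, c, hc, noMidpointGraph_adj.2 ⟨fun hac => hc (hac ▸ ha), fun b hb => ?_⟩⟩
  have hpos : 0 < dist a c := dist_pos.2 fun hac => hc (hac ▸ ha)
  by_cases hbS : b ∈ S
  · have := hmin (b, c) ⟨hbS, hc⟩
    linarith [hb.2]
  · have := hmin (a, b) ⟨ha, hbS⟩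
    linarith [hb.1, hb.2]

lemma card_isAP3_add_le [Finite M] (hmid : ∀ a b b' c : M, IsAP3 a b c → IsAP3 a b' c → b = b') :
    Nat.card {p : M × M × M // IsAP3 p.1 p.2.1 p.2.2} + 2 * (Nat.card M - 1) ≤ Nat.card M ^ 2 := by
  classical
  have := Fintype.ofFinite M
  cases isEmpty_or_nonempty M
  · simp
  set G := noMidpointGraph M
  have hconn : Nat.card M ≤ Nat.card G.edgeSet + 1 :=
    noMidpointGraph_connected.card_vert_le_card_edgeSet_add_one
  have hdarts : Nat.card {q : M × M // G.Adj q.1 q.2} = 2 * Nat.card G.edgeSet := by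
    rw [Nat.card_eq_fintype_card, Nat.card_eq_fintype_card, ← SimpleGraph.edgeFinset_card,
      ← G.dart_card_eq_twice_card_edges]
    exact Fintype.card_congr ⟨fun q => ⟨q.1, q.2⟩, fun d => ⟨d.toProd, d.adj⟩, fun _ => rfl,
      fun _ => rfl⟩
  have hinj : Nat.card {p : M × M × M // IsAP3 p.1 p.2.1 p.2.2} ≤
      Nat.card {q : M × M // ¬G.Adj q.1 q.2} :=
    Nat.card_le_card_of_injective
      (fun p => ⟨(p.1.1, p.1.2.2), fun h => (noMidpointGraph_adj.1 h).2 _ p.2⟩)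
      fun ⟨(a, b, c), hb⟩ ⟨(a', b', c'), hb'⟩ h => by
        simp only [Subtype.mk.injEq, Prod.mk.injEq] at h
        obtain ⟨rfl, rfl⟩ := h
        obtain rfl := hmid a b b' c hb hb'
        rfl
  have hcompl : Nat.card {q : M × M // ¬G.Adj q.1 q.2} =
      Nat.card M ^ 2 - Nat.card {q : M × M // G.Adj q.1 q.2} := by
    simp only [Nat.card_eq_fintype_card, Fintype.card_subtype_compl, Fintype.card_prod, sq]
  have hle : Nat.card {q : M × M // G.Adj q.1 q.2} ≤ Nat.card M ^ 2 := by
    simpa [sq] using Finite.card_subtype_le (fun q : M × M => G.Adj q.1 q.2)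
  omega

lemma ncard_AT_eq (A : Set M) :
    (AT A).ncard = Nat.card {p : A × A × A // IsAP3 p.1 p.2.1 p.2.2} := by
  rw [← Nat.card_coe_set_eq]
  exact Nat.card_congr
    { toFun := fun p => ⟨(⟨p.1.1, p.2.1⟩, ⟨p.1.2.1, p.2.2.1⟩, ⟨p.1.2.2, p.2.2.2.1⟩), p.2.2.2.2⟩
      invFun := fun p => ⟨(p.1.1, p.1.2.1, p.1.2.2), p.1.1.2, p.1.2.1.2, p.1.2.2.2, p.2⟩
      left_inv := fun _ => rfl
      right_inv := fun _ => rfl }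

theorem ncard_AT_le (hmid : ∀ a b b' c : M, IsAP3 a b c → IsAP3 a b' c → b = b')
    {A : Set M} (hA : A.Finite) : (AT A).ncard ≤ A.ncard ^ 2 + 2 - 2 * A.ncard := by
  have := hA.to_subtype
  have := card_isAP3_add_le (M := A) fun a b b' c hb hb' =>
    Subtype.ext (hmid a b b' c hb hb')
  rw [ncard_AT_eq, ← Nat.card_coe_set_eq]
  omega

lemma Set.Finite.AT {A : Set M} (hA : A.Finite) : (AT A).Finite :=
  (hA.prod (hA.prod hA)).subset fun _ hp => ⟨hp.1, hp.2.1, hp.2.2.1⟩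

lemma isAP3_self (x : M) : IsAP3 x x x := by simp [IsAP3]

lemma exists_ncard_eq_le_ncard_AT {m : ℕ} {o : M} {f : Fin m → M} {r : ℝ} (hr : 0 < r)
    (hfo : ∀ i, dist (f i) o = r) (hff : ∀ i j, i ≠ j → dist (f i) (f j) = 2 * r) :
    ∃ A : Set M, A.Finite ∧ A.ncard = m + 1 ∧ m ^ 2 + 1 ≤ (AT A).ncard := by
  classical
  have hf : Function.Injective f := fun i j h => by
    by_contra hij
    have := hff i j hij
    rw [h, dist_self] at this
    linarith
  have hfo_ne : ∀ i, f i ≠ o := fun i h => by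
    have := hfo i
    rw [h, dist_self] at this
    linarith
  set s := insert o (Finset.univ.image f)
  have hs : s.card = m + 1 := by
    rw [Finset.card_insert_of_notMem (by simpa using hfo_ne), Finset.card_image_of_injective _ hf,
      Finset.card_univ, Fintype.card_fin]
  set diag := s.image fun x => (x, x, x)
  set spokes := Finset.univ.offDiag.image fun q : Fin m × Fin m => (f q.1, o, f q.2)
  have hdiag : diag.card = m + 1 := by
    rw [Finset.card_image_of_injective _ fun x y h => congrArg Prod.fst h, hs]
  have hspokes : spokes.card = m * m - m := by
    rw [Finset.card_image_of_injective, Finset.offDiag_card, Finset.card_univ, Fintype.card_fin]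
    rintro ⟨i, j⟩ ⟨i', j'⟩ h
    simp only [Prod.mk.injEq] at h
    rw [hf h.1, hf h.2.2]
  have hdisj : Disjoint diag spokes := by
    simp only [diag, spokes, Finset.disjoint_left, Finset.mem_image, not_exists, not_and]
    rintro _ ⟨x, -, rfl⟩ ⟨i, j⟩ - h
    simp only [Prod.mk.injEq] at h
    exact hfo_ne i (h.1.trans h.2.1.symm)
  have hsub : ↑(diag ∪ spokes) ⊆ AT (s : Set M) := by
    simp only [diag, spokes, Finset.coe_union, Finset.coe_image, union_subset_iff, image_subset_iff]
    refine ⟨fun x hx => ⟨hx, hx, hx, isAP3_self x⟩, fun ⟨i, j⟩ hij => ?_⟩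
    have hij : i ≠ j := (Finset.mem_offDiag.1 hij).2.2
    refine ⟨by simp [s], by simp [s], by simp [s], ?_, ?_⟩
    · simp only [hfo, dist_comm o]
    · simp only [dist_comm o, hfo, hff i j hij]
      ring
  refine ⟨s, s.finite_toSet, by rw [ncard_coe_finset, hs], ?_⟩
  calc m ^ 2 + 1 = (diag ∪ spokes).card := by
        rw [Finset.card_union_of_disjoint hdisj, hdiag, hspokes, sq]
        have := Nat.le_mul_self m
        omega
    _ = (↑(diag ∪ spokes) : Set (M × M × M)).ncard := (ncard_coe_finset _).symm
    _ ≤ (AT (s : Set M)).ncard := ncard_le_ncard hsub s.finite_toSet.AT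

end Counting

section LinearIntervals

variable {M : Type*} [MetricSpace M]

/-- Every metric interval `{x | d(p,x) + d(x,q) = d(p,q)}` lies on an isometric copy of `ℝ`
through `p` and `q`. -/
def HasLinearIntervals (M : Type*) [MetricSpace M] : Prop :=
  ∀ p q : M, ∃ L : ℝ → M, Isometry L ∧ p ∈ range L ∧ q ∈ range L ∧
    ∀ x, dist p x + dist x q = dist p q → x ∈ range L

lemma Isometry.apply_eq_of_dist_add_dist_eq {L : ℝ → M} (hL : Isometry L) {a b c : ℝ}
    (hab : a ≤ b) (h : dist (L a) (L c) + dist (L c) (L b) = dist (L a) (L b)) :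
    L c = L (a + dist (L a) (L c)) := by
  simp only [hL.dist_eq, Real.dist_eq] at h ⊢
  congr 1
  cases abs_cases (a - c) <;> cases abs_cases (c - b) <;> cases abs_cases (a - b) <;> linarith

lemma HasLinearIntervals.exists_isometry (h : HasLinearIntervals M) (p q : M) :
    ∃ L : ℝ → M, Isometry L ∧ ∃ a, L a = p ∧ L (a + dist p q) = q ∧
      ∀ x, dist p x + dist x q = dist p q → x = L (a + dist p x) := by
  obtain ⟨L, hL, ⟨a, hp⟩, ⟨b, hq⟩, hmem⟩ := h p q
  wlog hab : a ≤ b generalizing L a b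
  · refine this (L ∘ Neg.neg) (hL.comp isometry_neg) (-a) (by simpa using hp) ?_ (-b)
      (by simpa using hq) (by linarith)
    rwa [neg_surjective.range_comp]
  subst hp hq
  refine ⟨L, hL, a, rfl, ?_, fun x hx => ?_⟩
  · rw [hL.dist_eq, Real.dist_eq, abs_of_nonpos (by linarith)]
    ring_nf
  · obtain ⟨c, rfl⟩ := hmem x hx
    exact hL.apply_eq_of_dist_add_dist_eq hab hx

theorem HasLinearIntervals.uniquelyGeodesic (h : HasLinearIntervals M) : UniquelyGeodesic M := by
  intro p q _
  obtain ⟨L, hL, a, hp, hq, hbetween⟩ := h.exists_isometry p q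
  have heq : ∀ γ, IsGeodesicMap p q γ → ∀ t ∈ Icc 0 (dist p q), γ t = L (a + t) := by
    rintro γ ⟨hγ₀, hγ₁, hγ⟩ t ht
    have h₀ := hγ 0 ⟨le_rfl, dist_nonneg⟩ t ht
    have h₁ := hγ t ht (dist p q) ⟨dist_nonneg, le_rfl⟩
    rw [hγ₀, abs_sub_comm, abs_of_nonneg (by linarith [ht.1])] at h₀
    rw [hγ₁, abs_sub_comm, abs_of_nonneg (by linarith [ht.2])] at h₁
    rw [hbetween (γ t) (by linarith), h₀, sub_zero]
  refine ⟨⟨fun t => L (a + t), ?_, hq, fun s _ t _ => ?_⟩, fun γ₁ γ₂ h₁ h₂ t ht => ?_⟩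
  · simpa using hp
  · rw [hL.dist_eq, Real.dist_eq, add_sub_add_left_eq_sub]
  · rw [heq γ₁ h₁ t ht, heq γ₂ h₂ t ht]

theorem HasLinearIntervals.eq_of_isAP3 (h : HasLinearIntervals M) {a b b' c : M}
    (hb : IsAP3 a b c) (hb' : IsAP3 a b' c) : b = b' := by
  obtain ⟨L, -, x, -, -, hbetween⟩ := h.exists_isometry a c
  rw [hbetween b hb.dist_add_dist, hbetween b' hb'.dist_add_dist, hb.1.trans hb.2,
    hb'.1.trans hb'.2]

end LinearIntervals

/-- A point is a branch index and a distance from the centre; the centre itself is recorded on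
branch `0`. -/
@[ext]
structure Hedgehog where
  branch : ℕ
  rad : ℝ
  rad_nonneg : 0 ≤ rad
  branch_eq_zero_of_rad_eq_zero : rad = 0 → branch = 0

namespace Hedgehog

noncomputable instance : MetricSpace Hedgehog where
  dist p q := if p.branch = q.branch then |p.rad - q.rad| else p.rad + q.rad
  dist_self p := by simp
  dist_comm p q := by
    by_cases h : p.branch = q.branch
    · simp [h, abs_sub_comm]
    · simp [h, Ne.symm h, add_comm]
  dist_triangle p q r := by
    have := p.rad_nonneg
    have := q.rad_nonneg
    have := r.rad_nonneg
    split_ifs <;> try omega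
    all_goals
      cases abs_cases (p.rad - q.rad) <;> cases abs_cases (q.rad - r.rad) <;>
        cases abs_cases (p.rad - r.rad) <;> linarith
  eq_of_dist_eq_zero {p q} h := by
    have := p.rad_nonneg
    have := q.rad_nonneg
    split_ifs at h with hpq
    · exact Hedgehog.ext hpq (sub_eq_zero.1 (abs_eq_zero.1 h))
    · exact (hpq ((p.branch_eq_zero_of_rad_eq_zero (by linarith)).trans
        (q.branch_eq_zero_of_rad_eq_zero (by linarith)).symm)).elim

lemma dist_def (p q : Hedgehog) :
    dist p q = if p.branch = q.branch then |p.rad - q.rad| else p.rad + q.rad := rfl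

def center : Hedgehog := ⟨0, 0, le_rfl, fun _ => rfl⟩

lemma dist_center (p : Hedgehog) : dist p center = p.rad := by
  rw [dist_def]
  split_ifs <;> simp [center, abs_of_nonneg p.rad_nonneg]

lemma eq_center_of_rad_eq_zero {p : Hedgehog} (h : p.rad = 0) : p = center :=
  Hedgehog.ext (p.branch_eq_zero_of_rad_eq_zero h) h

/-- The point at distance `r` from the centre on branch `i`, or the centre when `r ≤ 0`. -/
noncomputable def point (i : ℕ) (r : ℝ) : Hedgehog :=
  if h : 0 < r then ⟨i, r, h.le, fun h' => (h.ne' h').elim⟩ else center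

lemma point_of_pos (i : ℕ) {r : ℝ} (h : 0 < r) :
    point i r = ⟨i, r, h.le, fun h' => (h.ne' h').elim⟩ := dif_pos h

lemma point_of_nonpos (i : ℕ) {r : ℝ} (h : r ≤ 0) : point i r = center := dif_neg h.not_gt

lemma point_branch_rad (p : Hedgehog) : point p.branch p.rad = p := by
  rcases p.rad_nonneg.lt_or_eq with h | h
  · exact dif_pos h
  · rw [point_of_nonpos _ h.ge]
    exact (eq_center_of_rad_eq_zero h.symm).symm

lemma dist_point (i j : ℕ) {r s : ℝ} (hr : 0 ≤ r) (hs : 0 ≤ s) :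
    dist (point i r) (point j s) = if i = j then |r - s| else r + s := by
  rcases hr.lt_or_eq with hr | rfl <;> rcases hs.lt_or_eq with hs | rfl
  · rw [point_of_pos i hr, point_of_pos j hs, dist_def]
  · rw [point_of_nonpos j le_rfl, dist_center, point_of_pos i hr]
    simp [abs_of_pos hr]
  · rw [point_of_nonpos i le_rfl, dist_comm, dist_center, point_of_pos j hs]
    simp [abs_of_pos hs]
  · simp [point_of_nonpos]

lemma dist_point_center (i : ℕ) {r : ℝ} (hr : 0 ≤ r) : dist (point i r) center = r := by
  rcases hr.lt_or_eq with hr | rfl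
  · rw [dist_center, point_of_pos i hr]
  · rw [point_of_nonpos i le_rfl, dist_self]

noncomputable def line (i j : ℕ) (x : ℝ) : Hedgehog := if 0 ≤ x then point j x else point i (-x)

lemma isometry_line {i j : ℕ} (hij : i ≠ j) : Isometry (line i j) := by
  refine Isometry.of_dist_eq fun x y => ?_
  rw [Real.dist_eq]
  unfold line
  split_ifs with hx hy hy
  · rw [dist_point j j hx hy, if_pos rfl]
  · rw [dist_point j i hx (by linarith : (0 : ℝ) ≤ -y), if_neg hij.symm,
      abs_of_nonneg (by linarith)]
    ring
  · rw [dist_point i j (by linarith : (0 : ℝ) ≤ -x) hy, if_neg hij, abs_of_nonpos (by linarith)]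
    ring
  · rw [dist_point i i (by linarith : (0 : ℝ) ≤ -x) (by linarith : (0 : ℝ) ≤ -y), if_pos rfl,
      ← abs_neg]
    ring_nf

lemma mem_range_line {i j : ℕ} {p : Hedgehog} (hp : p.branch = i ∨ p.branch = j) :
    p ∈ range (line i j) := by
  rw [← point_branch_rad p]
  rcases hp with rfl | rfl
  · rcases p.rad_nonneg.lt_or_eq with h | h
    · exact ⟨-p.rad, by simp [line, h.not_ge]⟩
    · exact ⟨0, by simp [line, point_of_nonpos, ← h]⟩
  · exact ⟨p.rad, by simp [line, p.rad_nonneg]⟩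

lemma dist_line_point {i j l : ℕ} (hi : l ≠ i) (hj : l ≠ j) (x : ℝ) {u : ℝ} (hu : 0 ≤ u) :
    dist (line i j x) (point l u) = |x| + u := by
  unfold line
  split_ifs with hx
  · rw [dist_point j l hx hu, if_neg hj.symm, abs_of_nonneg hx]
  · rw [dist_point i l (by linarith : (0 : ℝ) ≤ -x) hu, if_neg hi.symm, abs_of_neg (by linarith)]

-- A point off the two branches through `p` and `q` is at distance `|a| + rad` from each point
-- `line i j a`, so it lies between `p` and `q` only if it is the centre.
theorem hasLinearIntervals : HasLinearIntervals Hedgehog := by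
  intro p q
  set j := if q.branch = p.branch then p.branch + 1 else q.branch
  have hpj : p.branch ≠ j := by unfold j; split_ifs <;> omega
  have hq : q.branch = p.branch ∨ q.branch = j := by unfold j; split_ifs <;> simp_all
  refine ⟨line p.branch j, isometry_line hpj, mem_range_line (.inl rfl), mem_range_line hq,
    fun x hx => ?_⟩
  by_cases hxb : x.branch = p.branch ∨ x.branch = j
  · exact mem_range_line hxb
  rw [not_or] at hxb
  obtain ⟨a, ha⟩ := mem_range_line (i := p.branch) (j := j) (p := p) (.inl rfl)
  obtain ⟨b, hb⟩ := mem_range_line hq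
  rw [← point_branch_rad x, ← ha, ← hb, dist_line_point hxb.1 hxb.2 a x.rad_nonneg, dist_comm,
    dist_line_point hxb.1 hxb.2 b x.rad_nonneg, (isometry_line hpj).dist_eq, Real.dist_eq] at hx
  have hx0 : x.rad = 0 := by linarith [abs_sub a b, x.rad_nonneg]
  exact ⟨0, by rw [eq_center_of_rad_eq_zero hx0, line, if_pos le_rfl, point_of_nonpos _ le_rfl]⟩

end Hedgehog

/-- There is a uniquely geodesic metric space `M₀` with `μ_n(M₀) = n² − 2n + 2`
for every positive integer `n`. -/
theorem exists_uniquely_geodesic_mu_eq :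
    ∃ (M₀ : Type) (_ : MetricSpace M₀), UniquelyGeodesic M₀ ∧
      ∀ n : ℕ, 0 < n →
        IsGreatest {k : ℕ | ∃ A : Set M₀, A.Finite ∧ A.ncard = n ∧ (AT A).ncard = k}
          (n ^ 2 + 2 - 2 * n) := by
  have hle {A : Set Hedgehog} (hA : A.Finite) := ncard_AT_le
    (fun _ _ _ _ => Hedgehog.hasLinearIntervals.eq_of_isAP3) hA
  refine ⟨Hedgehog, inferInstance, Hedgehog.hasLinearIntervals.uniquelyGeodesic,
    fun n hn => ⟨?_, ?_⟩⟩
  · obtain ⟨m, rfl⟩ : ∃ m, n = m + 1 := ⟨n - 1, by omega⟩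
    obtain ⟨A, hA, hcard, hge⟩ := exists_ncard_eq_le_ncard_AT (o := Hedgehog.center)
      (f := fun i : Fin m => Hedgehog.point i 1) one_pos
      (fun i => Hedgehog.dist_point_center i zero_le_one) fun i j hij => by
        rw [Hedgehog.dist_point i j zero_le_one zero_le_one, if_neg (Fin.val_injective.ne hij)]
        norm_num
    have hsq : (m + 1) ^ 2 + 2 - 2 * (m + 1) = m ^ 2 + 1 := by ring_nf; omega
    refine ⟨A, hA, hcard, le_antisymm ?_ (hsq ▸ hge)⟩
    simpa only [hcard] using hle hA
  · rintro k ⟨A, hA, rfl, rfl⟩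
    exact hle hA
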